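/- If f : [a,b] → ℝ is of class C^6 with f⁽⁶⁾(x) ≥ 0 for all x ∈ [a,b], then G[f;a,b] ≤ ∫_a^b f(x) dx ≤ L[f;a,b], where G is the three-point Gauss quadrature and L is the four-point Lobatto quadrature on [a,b]. -/

import Mathlib

open MeasureTheory intervalIntegral

noncomputable def gaussQ (f : ℝ → ℝ) (a b : ℝ) : ℝ :=
  (b - a) / 18 * (5 * f ((5 + Real.sqrt 15) / 10 * a + (5 - Real.sqrt 15) / 10 * b)
    + 8 * f ((a + b) / 2)
    + 5 * f ((5 - Real.sqrt 15) / 10 * a + (5 + Real.sqrt 15) / 10 * b))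

noncomputable def lobattoQ (f : ℝ → ℝ) (a b : ℝ) : ℝ :=
  (b - a) / 12 * (f a + 5 * f ((5 + Real.sqrt 5) / 10 * a + (5 - Real.sqrt 5) / 10 * b)
    + 5 * f ((5 - Real.sqrt 5) / 10 * a + (5 + Real.sqrt 5) / 10 * b) + f b)

noncomputable def quadQ (f : ℝ → ℝ) (a b : ℝ) : ℝ :=
  3 / 4 * gaussQ f a b + 1 / 4 * lobattoQ f a b

/-!
Taylor's formula with integral remainder at `a` writes
`f x = T x + (1/5!) ∫ₐᵇ (x - t)₊⁵ f⁽⁶⁾(t) dt` with `T` a quintic. Both rules integrate quintics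
exactly, so by Fubini `∫ f - Q f = (1/5!) ∫ₐᵇ K(t) f⁽⁶⁾(t) dt`, where
`K(t) = (b - t)⁶/6 - Q[(· - t)₊⁵]` is the Peano kernel of the rule `Q`. It remains to show that
`K ≥ 0` for Gauss and `K ≤ 0` for Lobatto. Exactness on `(· - t)⁵` also gives
`K(t) = (t - a)⁶/6 - Q[(t - ·)₊⁵]`; using this form on the left half of `[a, b]` and the defining
one on the right half, only the nodes nearest the endpoint contribute. For Lobatto the sign then
reduces to `u⁵ (c - 2u) ≥ 0`, for Gauss to the weighted AM-GM inequality
`p⁵ q ≤ (5⁵/6⁶) (p + q)⁶`.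
-/

open Set
open scoped Nat

theorem iteratedDerivWithin_subset {f : ℝ → ℝ} {s t : Set ℝ} {n : ℕ} {x : ℝ} (st : s ⊆ t)
    (hs : UniqueDiffOn ℝ s) (ht : UniqueDiffOn ℝ t) (hf : ContDiffOn ℝ n f t) (hx : x ∈ s) :
    iteratedDerivWithin n f s x = iteratedDerivWithin n f t x := by
  simp only [iteratedDerivWithin_eq_iteratedFDerivWithin,
    iteratedFDerivWithin_subset st hs ht hf hx]

theorem taylor_integral_remainder_Icc {f : ℝ → ℝ} {a b x : ℝ} {n : ℕ} (hab : a < b)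
    (hf : ContDiffOn ℝ (n + 1 : ℕ) f (Icc a b)) (hx : x ∈ Icc a b) :
    f x = taylorWithinEval f n (Icc a b) a x +
      ∫ t in a..x, (x - t) ^ n / n ! * iteratedDerivWithin (n + 1) f (Icc a b) t := by
  rcases hx.1.eq_or_lt with rfl | hax
  · simp [taylorWithinEval_self]
  have hsub : Icc a x ⊆ Icc a b := Icc_subset_Icc_right hx.2
  have hderiv : ∀ k ≤ n + 1, ∀ t ∈ Icc a x,
      iteratedDerivWithin k f (Icc a x) t = iteratedDerivWithin k f (Icc a b) t :=
    fun k hk t ht => iteratedDerivWithin_subset hsub (uniqueDiffOn_Icc hax) (uniqueDiffOn_Icc hab)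
      (hf.of_le (by exact_mod_cast hk)) ht
  have h := taylor_integral_remainder (hf.mono (uIcc_of_le hax.le ▸ hsub))
  rw [uIcc_of_le hax.le] at h
  have htaylor : taylorWithinEval f n (Icc a x) a x = taylorWithinEval f n (Icc a b) a x := by
    simp only [taylor_within_apply]
    refine Finset.sum_congr rfl fun k hk => ?_
    rw [hderiv k (by grind) a (left_mem_Icc.2 hax.le)]
  have hrem : ∫ t in a..x, ((x - t) ^ n / n !) • iteratedDerivWithin (n + 1) f (Icc a x) t =
      ∫ t in a..x, (x - t) ^ n / n ! * iteratedDerivWithin (n + 1) f (Icc a b) t := by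
    refine integral_congr fun t ht => ?_
    rw [uIcc_of_le hax.le] at ht
    simp only [smul_eq_mul, hderiv (n + 1) le_rfl t ht]
  rw [htaylor, hrem] at h
  linarith

theorem integral_max_sub_pow {a b t : ℝ} {n : ℕ} (hn : n ≠ 0) (ht : t ∈ Icc a b) :
    ∫ x in a..b, max (x - t) 0 ^ n = (b - t) ^ (n + 1) / (n + 1) := by
  have hcont : Continuous fun x : ℝ => max (x - t) 0 ^ n := by fun_prop
  have hleft : ∫ x in a..t, max (x - t) 0 ^ n = 0 := by
    rw [integral_congr (g := fun _ => 0) fun x hx => ?_, intervalIntegral.integral_zero]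
    rw [uIcc_of_le ht.1] at hx
    simp [max_eq_right (sub_nonpos.2 hx.2), hn]
  have hright : ∫ x in t..b, max (x - t) 0 ^ n = ∫ x in t..b, (x - t) ^ n := by
    refine integral_congr fun x hx => ?_
    rw [uIcc_of_le ht.2] at hx
    simp [max_eq_left (sub_nonneg.2 hx.1)]
  rw [← integral_add_adjacent_intervals (hcont.intervalIntegrable a t)
    (hcont.intervalIntegrable t b), hleft, hright, zero_add,
    integral_comp_sub_right (fun x => x ^ n), sub_self, integral_pow]
  simp

theorem integral_pow_mul_eq_integral_max_pow_mul {g : ℝ → ℝ} {a b x : ℝ} {n : ℕ} (hn : n ≠ 0)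
    (hg : ContinuousOn g (Icc a b)) (hx : x ∈ Icc a b) :
    ∫ t in a..x, (x - t) ^ n * g t = ∫ t in a..b, max (x - t) 0 ^ n * g t := by
  have hcont : ContinuousOn (fun t => max (x - t) 0 ^ n * g t) (Icc a b) := by fun_prop
  have hleft : ∫ t in a..x, max (x - t) 0 ^ n * g t = ∫ t in a..x, (x - t) ^ n * g t := by
    refine integral_congr fun t ht => ?_
    rw [uIcc_of_le hx.1] at ht
    simp [max_eq_left (sub_nonneg.2 ht.2)]
  have hright : ∫ t in x..b, max (x - t) 0 ^ n * g t = 0 := by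
    rw [integral_congr (g := fun _ => 0) fun t ht => ?_, intervalIntegral.integral_zero]
    rw [uIcc_of_le hx.2] at ht
    simp [max_eq_right (sub_nonpos.2 ht.1), hn]
  rw [← integral_add_adjacent_intervals
    ((hcont.mono (uIcc_subset_Icc (left_mem_Icc.2 (hx.1.trans hx.2)) hx)).intervalIntegrable)
    ((hcont.mono (uIcc_subset_Icc hx (right_mem_Icc.2 (hx.1.trans hx.2)))).intervalIntegrable),
    hleft, hright, add_zero]

theorem integral_integral_max_sub_pow_mul {g : ℝ → ℝ} {a b : ℝ} {n : ℕ} (hn : n ≠ 0)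
    (hab : a ≤ b) (hg : ContinuousOn g (Icc a b)) :
    ∫ x in a..b, ∫ t in a..b, max (x - t) 0 ^ n * g t =
      ∫ t in a..b, (b - t) ^ (n + 1) / (n + 1) * g t := by
  have hswap : ∫ x in a..b, ∫ t in a..b, max (x - t) 0 ^ n * g t =
      ∫ t in a..b, ∫ x in a..b, max (x - t) 0 ^ n * g t := by
    simp only [integral_of_le hab]
    refine integral_integral_swap ?_
    rw [Measure.prod_restrict, ← Measure.volume_eq_prod]
    refine (ContinuousOn.integrableOn_compact (isCompact_Icc.prod isCompact_Icc) ?_).mono_set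
      (prod_mono Ioc_subset_Icc_self Ioc_subset_Icc_self)
    exact ((continuous_fst.sub continuous_snd).max continuous_const).pow n |>.continuousOn.mul
      (hg.comp continuous_snd.continuousOn fun p hp => hp.2)
  rw [hswap]
  refine integral_congr fun t ht => ?_
  rw [uIcc_of_le hab] at ht
  simp only [intervalIntegral.integral_mul_const, integral_max_sub_pow hn ht]

theorem integral_sub_pow (a b : ℝ) (k : ℕ) :
    ∫ x in a..b, (x - a) ^ k = (b - a) ^ (k + 1) / (k + 1) := by
  simp [integral_comp_sub_right (fun x => x ^ k), integral_pow]

section Quadrature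

variable {ι : Type*} [Fintype ι]

noncomputable def quadrature (w ξ : ι → ℝ) (f : ℝ → ℝ) : ℝ :=
  ∑ i, w i * f (ξ i)

def ExactUpToDegree (n : ℕ) (w ξ : ι → ℝ) (a b : ℝ) : Prop :=
  ∀ k ≤ n, quadrature w ξ (fun x => (x - a) ^ k) = ∫ x in a..b, (x - a) ^ k

/-- `max x 0 ^ n` is the truncated power `x₊ⁿ` only for `n ≠ 0`: `max x 0 ^ 0 = 1`. -/
noncomputable def peanoKernel (n : ℕ) (w ξ : ι → ℝ) (b t : ℝ) : ℝ :=
  (b - t) ^ (n + 1) / (n + 1) - ∑ i, w i * max (ξ i - t) 0 ^ n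

variable {n : ℕ} {w ξ : ι → ℝ} {a b : ℝ}

namespace ExactUpToDegree

theorem quadrature_sum (hexact : ExactUpToDegree n w ξ a b) (c : ℕ → ℝ) :
    quadrature w ξ (fun x => ∑ k ∈ Finset.range (n + 1), c k * (x - a) ^ k) =
      ∫ x in a..b, ∑ k ∈ Finset.range (n + 1), c k * (x - a) ^ k := by
  rw [intervalIntegral.integral_finsetSum fun k _ =>
    Continuous.intervalIntegrable (by fun_prop) _ _]
  simp only [quadrature, Finset.mul_sum]
  rw [Finset.sum_comm]
  refine Finset.sum_congr rfl fun k hk => ?_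
  rw [intervalIntegral.integral_const_mul, ← hexact k (Finset.mem_range_succ_iff.1 hk), quadrature,
    Finset.mul_sum]
  exact Finset.sum_congr rfl fun i _ => by ring

theorem quadrature_taylorWithinEval (hexact : ExactUpToDegree n w ξ a b) (f : ℝ → ℝ)
    (s : Set ℝ) :
    quadrature w ξ (taylorWithinEval f n s a) = ∫ x in a..b, taylorWithinEval f n s a x := by
  have h : taylorWithinEval f n s a = fun x => ∑ k ∈ Finset.range (n + 1),
      ((k ! : ℝ)⁻¹ * iteratedDerivWithin k f s a) * (x - a) ^ k := by
    ext x
    simp only [taylor_within_apply, smul_eq_mul]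
    exact Finset.sum_congr rfl fun k _ => by ring
  rw [h, hexact.quadrature_sum]

theorem quadrature_sub_pow (hexact : ExactUpToDegree n w ξ a b) (t : ℝ) :
    quadrature w ξ (fun x => (x - t) ^ n) = ∫ x in a..b, (x - t) ^ n := by
  have h : (fun x => (x - t) ^ n) = fun x => ∑ k ∈ Finset.range (n + 1),
      ((a - t) ^ (n - k) * n.choose k) * (x - a) ^ k := by
    ext x
    rw [show x - t = (x - a) + (a - t) by ring, add_pow]
    exact Finset.sum_congr rfl fun k _ => by ring
  rw [h, hexact.quadrature_sum]

/-- Since `x₊ⁿ - (-1)ⁿ (-x)₊ⁿ = xⁿ` and the rule integrates `(· - t)ⁿ` exactly, the kernel can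
equally be computed from the left endpoint. -/
theorem peanoKernel_eq (hexact : ExactUpToDegree n w ξ a b) (hn : n ≠ 0) (t : ℝ) :
    peanoKernel n w ξ b t =
      (-1) ^ (n + 1) * ((t - a) ^ (n + 1) / (n + 1) - ∑ i, w i * max (t - ξ i) 0 ^ n) := by
  have hmax : ∀ y : ℝ, max y 0 ^ n = y ^ n - (-1) ^ n * max (-y) 0 ^ n := by
    intro y
    rcases le_total y 0 with hy | hy
    · rw [max_eq_right hy, max_eq_left (neg_nonneg.2 hy), ← mul_pow]
      simp [hn]
    · rw [max_eq_left hy, max_eq_right (neg_nonpos.2 hy)]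
      simp [hn]
  have hsum : ∑ i, w i * max (ξ i - t) 0 ^ n =
      ∑ i, w i * (ξ i - t) ^ n - (-1) ^ n * ∑ i, w i * max (t - ξ i) 0 ^ n := by
    rw [Finset.mul_sum, ← Finset.sum_sub_distrib]
    exact Finset.sum_congr rfl fun i _ => by rw [hmax, neg_sub]; ring
  have hint := hexact.quadrature_sub_pow t
  simp only [quadrature] at hint
  rw [integral_comp_sub_right (fun x => x ^ n), integral_pow] at hint
  rw [peanoKernel, hsum, hint, show a - t = -(t - a) by ring, neg_pow (t - a)]
  ring

end ExactUpToDegree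

theorem integral_peanoKernel_mul {g : ℝ → ℝ}
    (hab : a ≤ b) (hg : ContinuousOn g (Icc a b)) :
    ∫ t in a..b, peanoKernel n w ξ b t * g t =
      (∫ t in a..b, (b - t) ^ (n + 1) / (n + 1) * g t) -
        ∑ i, w i * ∫ t in a..b, max (ξ i - t) 0 ^ n * g t := by
  have hint : ∀ h : ℝ → ℝ, ContinuousOn h (Icc a b) → IntervalIntegrable h volume a b :=
    fun h hh => (hh.mono (uIcc_of_le hab).le).intervalIntegrable
  simp only [peanoKernel, sub_mul, Finset.sum_mul, mul_assoc]
  rw [integral_sub (hint _ (by fun_prop)) (hint _ (by fun_prop)),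
    intervalIntegral.integral_finsetSum fun i _ => hint _ (by fun_prop)]
  simp only [intervalIntegral.integral_const_mul]

theorem integral_sub_quadrature_eq_integral_peanoKernel_mul {f : ℝ → ℝ} (hn : n ≠ 0) (hab : a < b)
    (hf : ContDiffOn ℝ (n + 1 : ℕ) f (Icc a b))
    (hξ : ∀ i, ξ i ∈ Icc a b) (hexact : ExactUpToDegree n w ξ a b) :
    (∫ x in a..b, f x) - quadrature w ξ f =
      (n ! : ℝ)⁻¹ *
        ∫ t in a..b, peanoKernel n w ξ b t * iteratedDerivWithin (n + 1) f (Icc a b) t := by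
  set g := iteratedDerivWithin (n + 1) f (Icc a b)
  have hg : ContinuousOn g (Icc a b) :=
    hf.continuousOn_iteratedDerivWithin le_rfl (uniqueDiffOn_Icc hab)
  have hT : Continuous (taylorWithinEval f n (Icc a b) a) := by
    simp only [funext (taylor_within_apply f n (Icc a b) a)]
    fun_prop
  have hrepr : ∀ x ∈ Icc a b, f x = taylorWithinEval f n (Icc a b) a x +
      (n ! : ℝ)⁻¹ * ∫ t in a..b, max (x - t) 0 ^ n * g t := by
    intro x hx
    rw [taylor_integral_remainder_Icc hab hf hx,
      ← integral_pow_mul_eq_integral_max_pow_mul hn hg hx, ← intervalIntegral.integral_const_mul]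
    congr 1
    exact integral_congr fun t _ => by ring
  have hrem_cont : ContinuousOn (fun x => ∫ t in a..b, max (x - t) 0 ^ n * g t) (Icc a b) := by
    refine ((hf.continuousOn.sub hT.continuousOn).const_smul (n ! : ℝ)).congr fun x hx => ?_
    simp only [Pi.smul_apply, Pi.sub_apply, smul_eq_mul]
    rw [hrepr x hx]
    field_simp
    ring
  have hintegral : ∫ x in a..b, f x = (∫ x in a..b, taylorWithinEval f n (Icc a b) a x) +
      (n ! : ℝ)⁻¹ * ∫ t in a..b, (b - t) ^ (n + 1) / (n + 1) * g t := by
    rw [integral_congr fun x hx => hrepr x (uIcc_of_le hab.le ▸ hx),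
      integral_add (hT.intervalIntegrable a b)
        ((hrem_cont.mono (uIcc_of_le hab.le).le).intervalIntegrable.const_mul _),
      intervalIntegral.integral_const_mul, integral_integral_max_sub_pow_mul hn hab.le hg]
  have hquad : quadrature w ξ f = quadrature w ξ (taylorWithinEval f n (Icc a b) a) +
      (n ! : ℝ)⁻¹ * ∑ i, w i * ∫ t in a..b, max (ξ i - t) 0 ^ n * g t := by
    simp only [quadrature, hrepr _ (hξ _), mul_add, Finset.sum_add_distrib, Finset.mul_sum,
      mul_left_comm]
  rw [hintegral, hquad, hexact.quadrature_taylorWithinEval, integral_peanoKernel_mul hab.le hg]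
  ring

theorem quadrature_le_integral_of_peanoKernel_nonneg {f : ℝ → ℝ} (hn : n ≠ 0) (hab : a < b)
    (hf : ContDiffOn ℝ (n + 1 : ℕ) f (Icc a b)) (hξ : ∀ i, ξ i ∈ Icc a b)
    (hexact : ExactUpToDegree n w ξ a b) (hK : ∀ t ∈ Icc a b, 0 ≤ peanoKernel n w ξ b t)
    (hpos : ∀ t ∈ Icc a b, 0 ≤ iteratedDerivWithin (n + 1) f (Icc a b) t) :
    quadrature w ξ f ≤ ∫ x in a..b, f x := by
  have h := integral_sub_quadrature_eq_integral_peanoKernel_mul hn hab hf hξ hexact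
  have hint := intervalIntegral.integral_nonneg (μ := volume) hab.le fun t ht =>
    mul_nonneg (hK t ht) (hpos t ht)
  nlinarith [inv_nonneg.2 (Nat.cast_nonneg (α := ℝ) n !)]

theorem integral_le_quadrature_of_peanoKernel_nonpos {f : ℝ → ℝ} (hn : n ≠ 0) (hab : a < b)
    (hf : ContDiffOn ℝ (n + 1 : ℕ) f (Icc a b)) (hξ : ∀ i, ξ i ∈ Icc a b)
    (hexact : ExactUpToDegree n w ξ a b) (hK : ∀ t ∈ Icc a b, peanoKernel n w ξ b t ≤ 0)
    (hpos : ∀ t ∈ Icc a b, 0 ≤ iteratedDerivWithin (n + 1) f (Icc a b) t) :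
    ∫ x in a..b, f x ≤ quadrature w ξ f := by
  have h := integral_sub_quadrature_eq_integral_peanoKernel_mul hn hab hf hξ hexact
  have hint := intervalIntegral.integral_nonneg (μ := volume) hab.le fun t ht =>
    neg_nonneg.2 (mul_nonpos_of_nonpos_of_nonneg (hK t ht) (hpos t ht))
  rw [intervalIntegral.integral_neg] at hint
  nlinarith [inv_nonneg.2 (Nat.cast_nonneg (α := ℝ) n !)]

end Quadrature

/-- Weighted AM-GM: `(p/5)⁵ q ≤ ((p + q)/6)⁶`. -/
theorem pow_five_mul_le {p q : ℝ} (hp : 0 ≤ p) (hq : 0 ≤ q) :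
    46656 * (p ^ 5 * q) ≤ 3125 * (p + q) ^ 6 := by
  have h : 0 ≤ (p - 5 * q) ^ 2 *
      (3125 * p ^ 4 + 3344 * p ^ 3 * q + 2190 * p ^ 2 * q ^ 2 + 800 * p * q ^ 3 + 125 * q ^ 4) := by
    positivity
  linear_combination h

/-- `15625/139968 = 5⁶/(3·6⁶)` is the least `α` for which AM-GM with `q = α c` suffices; the Gauss
value `(5 - √15)/10 ≈ 0.1127` exceeds it by about one percent. -/
theorem five_mul_max_sub_pow_five_le {α c u : ℝ} (hα : 15625 / 139968 ≤ α) (hc : 0 ≤ c) :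
    5 * c * max (u - α * c) 0 ^ 5 ≤ 3 * u ^ 6 := by
  rcases le_total (u - α * c) 0 with hu | hu
  · rw [max_eq_right hu, zero_pow (by norm_num), mul_zero]
    positivity
  have hα0 : 0 < α := lt_of_lt_of_le (by norm_num) hα
  have hamgm := pow_five_mul_le hu (mul_nonneg hα0.le hc)
  rw [sub_add_cancel] at hamgm
  have hu6 : 0 ≤ u ^ 6 := by positivity
  rw [max_eq_left hu]
  refine le_of_mul_le_mul_left ?_ hα0
  nlinarith [mul_le_mul_of_nonneg_right hα hu6]

noncomputable def gaussWeights (a b : ℝ) : Fin 3 → ℝ :=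
  ![5 * (b - a) / 18, 8 * (b - a) / 18, 5 * (b - a) / 18]

noncomputable def gaussNodes (a b : ℝ) : Fin 3 → ℝ :=
  ![a + (5 - √15) / 10 * (b - a), (a + b) / 2, b - (5 - √15) / 10 * (b - a)]

noncomputable def lobattoWeights (a b : ℝ) : Fin 4 → ℝ :=
  ![(b - a) / 12, 5 * (b - a) / 12, 5 * (b - a) / 12, (b - a) / 12]

noncomputable def lobattoNodes (a b : ℝ) : Fin 4 → ℝ :=
  ![a, a + (5 - √5) / 10 * (b - a), b - (5 - √5) / 10 * (b - a), b]

theorem gaussQ_eq_quadrature (f : ℝ → ℝ) (a b : ℝ) :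
    gaussQ f a b = quadrature (gaussWeights a b) (gaussNodes a b) f := by
  simp only [gaussQ, quadrature, gaussWeights, gaussNodes, Fin.sum_univ_three,
    Matrix.cons_val_zero, Matrix.cons_val_one, Matrix.cons_val]
  ring_nf

theorem lobattoQ_eq_quadrature (f : ℝ → ℝ) (a b : ℝ) :
    lobattoQ f a b = quadrature (lobattoWeights a b) (lobattoNodes a b) f := by
  simp only [lobattoQ, quadrature, lobattoWeights, lobattoNodes, Fin.sum_univ_four,
    Matrix.cons_val_zero, Matrix.cons_val_one, Matrix.cons_val]
  ring_nf

theorem gaussNodes_mem {a b : ℝ} (hab : a ≤ b) (i : Fin 3) : gaussNodes a b i ∈ Icc a b := by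
  have h0 : 0 ≤ √15 := Real.sqrt_nonneg 15
  have h5 : √15 ≤ 5 := Real.sqrt_le_iff.2 ⟨by norm_num, by norm_num⟩
  fin_cases i <;>
    simp only [gaussNodes, Fin.zero_eta, Fin.mk_one, Fin.reduceFinMk, Matrix.cons_val_zero,
      Matrix.cons_val_one, Matrix.cons_val, mem_Icc] <;>
    constructor <;> nlinarith

theorem lobattoNodes_mem {a b : ℝ} (hab : a ≤ b) (i : Fin 4) : lobattoNodes a b i ∈ Icc a b := by
  have h0 : 0 ≤ √5 := Real.sqrt_nonneg 5
  have h5 : √5 ≤ 5 := Real.sqrt_le_iff.2 ⟨by norm_num, by norm_num⟩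
  fin_cases i <;>
    simp only [lobattoNodes, Fin.zero_eta, Fin.mk_one, Fin.reduceFinMk, Matrix.cons_val_zero,
      Matrix.cons_val_one, Matrix.cons_val, mem_Icc] <;>
    constructor <;> nlinarith

theorem exactUpToDegree_gauss (a b : ℝ) :
    ExactUpToDegree 5 (gaussWeights a b) (gaussNodes a b) a b := by
  intro k hk
  have hs : √15 ^ 2 = 15 := Real.sq_sqrt (by norm_num)
  simp only [quadrature, gaussWeights, gaussNodes, Fin.sum_univ_three, Matrix.cons_val_zero,
    Matrix.cons_val_one, Matrix.cons_val, add_sub_cancel_left, integral_sub_pow]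
  interval_cases k
  · ring
  · ring
  · linear_combination (b - a) ^ 3 / 180 * hs
  · linear_combination (b - a) ^ 4 / 120 * hs
  · linear_combination (b - a) ^ 5 * (11 / 1200 + √15 ^ 2 / 18000) * hs
  · linear_combination (b - a) ^ 6 * (13 / 1440 + √15 ^ 2 / 7200) * hs

theorem exactUpToDegree_lobatto (a b : ℝ) :
    ExactUpToDegree 5 (lobattoWeights a b) (lobattoNodes a b) a b := by
  intro k hk
  have hp : √5 ^ 2 = 5 := Real.sq_sqrt (by norm_num)
  simp only [quadrature, lobattoWeights, lobattoNodes, Fin.sum_univ_four, Matrix.cons_val_zero,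
    Matrix.cons_val_one, Matrix.cons_val, sub_self, add_sub_cancel_left, integral_sub_pow]
  interval_cases k
  · ring
  · ring
  · linear_combination (b - a) ^ 3 / 120 * hp
  · linear_combination (b - a) ^ 4 / 80 * hp
  · linear_combination (b - a) ^ 5 * (31 / 2400 + √5 ^ 2 / 12000) * hp
  · linear_combination (b - a) ^ 6 * (11 / 960 + √5 ^ 2 / 4800) * hp

theorem peanoKernel_gauss_nonneg {a b t : ℝ} (ht : t ∈ Icc a b) :
    0 ≤ peanoKernel 5 (gaussWeights a b) (gaussNodes a b) b t := by
  have hs0 : 0 ≤ √15 := Real.sqrt_nonneg 15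
  have hs5 : √15 ≤ 5 := Real.sqrt_le_iff.2 ⟨by norm_num, by norm_num⟩
  have hα : 15625 / 139968 ≤ (5 - √15) / 10 := by
    nlinarith [Real.sq_sqrt (show (0 : ℝ) ≤ 15 by norm_num)]
  have hc : 0 ≤ b - a := by linarith [ht.1, ht.2]
  rcases le_total t ((a + b) / 2) with hm | hm
  · rw [(exactUpToDegree_gauss a b).peanoKernel_eq (by norm_num)]
    simp only [Nat.reduceAdd, Nat.cast_ofNat, gaussWeights, gaussNodes, Fin.sum_univ_three,
      Matrix.cons_val_zero, Matrix.cons_val_one, Matrix.cons_val]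
    have h1 : max (t - (a + b) / 2) 0 = 0 := max_eq_right (by linarith)
    have h2 : max (t - (b - (5 - √15) / 10 * (b - a))) 0 = 0 := max_eq_right (by nlinarith)
    rw [h1, h2, show t - (a + (5 - √15) / 10 * (b - a)) = t - a - (5 - √15) / 10 * (b - a) by ring]
    linarith [five_mul_max_sub_pow_five_le (u := t - a) hα hc]
  · simp only [peanoKernel, Nat.reduceAdd, Nat.cast_ofNat, gaussWeights, gaussNodes,
      Fin.sum_univ_three, Matrix.cons_val_zero, Matrix.cons_val_one, Matrix.cons_val]
    have h0 : max (a + (5 - √15) / 10 * (b - a) - t) 0 = 0 := max_eq_right (by nlinarith)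
    have h1 : max ((a + b) / 2 - t) 0 = 0 := max_eq_right (by linarith)
    rw [h0, h1, show b - (5 - √15) / 10 * (b - a) - t = b - t - (5 - √15) / 10 * (b - a) by ring]
    linarith [five_mul_max_sub_pow_five_le (u := b - t) hα hc]

theorem peanoKernel_lobatto_nonpos {a b t : ℝ} (ht : t ∈ Icc a b) :
    peanoKernel 5 (lobattoWeights a b) (lobattoNodes a b) b t ≤ 0 := by
  have hp0 : 0 ≤ √5 := Real.sqrt_nonneg 5
  have hp5 : √5 ≤ 5 := Real.sqrt_le_iff.2 ⟨by norm_num, by norm_num⟩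
  have hc : 0 ≤ b - a := by linarith [ht.1, ht.2]
  rcases le_total t ((a + b) / 2) with hm | hm
  · rw [(exactUpToDegree_lobatto a b).peanoKernel_eq (by norm_num)]
    simp only [Nat.reduceAdd, Nat.cast_ofNat, lobattoWeights, lobattoNodes, Fin.sum_univ_four,
      Matrix.cons_val_zero, Matrix.cons_val_one, Matrix.cons_val]
    have h0 : max (t - a) 0 = t - a := max_eq_left (by linarith [ht.1])
    have h2 : max (t - (b - (5 - √5) / 10 * (b - a))) 0 = 0 := max_eq_right (by nlinarith)
    have h3 : max (t - b) 0 = 0 := max_eq_right (by linarith [ht.2])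
    rw [h0, h2, h3]
    have hu : 0 ≤ (t - a) ^ 5 * (b - a - 2 * (t - a)) :=
      mul_nonneg (pow_nonneg (by linarith [ht.1]) 5) (by linarith)
    have hM : 0 ≤ (b - a) * max (t - (a + (5 - √5) / 10 * (b - a))) 0 ^ 5 := by positivity
    nlinarith
  · simp only [peanoKernel, Nat.reduceAdd, Nat.cast_ofNat, lobattoWeights, lobattoNodes,
      Fin.sum_univ_four, Matrix.cons_val_zero, Matrix.cons_val_one, Matrix.cons_val]
    have h0 : max (a - t) 0 = 0 := max_eq_right (by linarith [ht.1])
    have h1 : max (a + (5 - √5) / 10 * (b - a) - t) 0 = 0 := max_eq_right (by nlinarith)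
    have h3 : max (b - t) 0 = b - t := max_eq_left (by linarith [ht.2])
    rw [h0, h1, h3]
    have hv : 0 ≤ (b - t) ^ 5 * (b - a - 2 * (b - t)) :=
      mul_nonneg (pow_nonneg (by linarith [ht.2]) 5) (by linarith)
    have hM : 0 ≤ (b - a) * max (b - (5 - √5) / 10 * (b - a) - t) 0 ^ 5 := by positivity
    nlinarith

theorem bessenyei_pales (a b : ℝ) (hab : a < b) (f : ℝ → ℝ)
    (hf : ContDiffOn ℝ 6 f (Set.Icc a b))
    (hpos : ∀ x ∈ Set.Icc a b, 0 ≤ iteratedDerivWithin 6 f (Set.Icc a b) x) :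
    gaussQ f a b ≤ (∫ x in a..b, f x) ∧ (∫ x in a..b, f x) ≤ lobattoQ f a b := by
  rw [gaussQ_eq_quadrature, lobattoQ_eq_quadrature]
  exact ⟨quadrature_le_integral_of_peanoKernel_nonneg (by norm_num) hab hf (gaussNodes_mem hab.le)
      (exactUpToDegree_gauss a b) (fun t ht => peanoKernel_gauss_nonneg ht) hpos,
    integral_le_quadrature_of_peanoKernel_nonpos (by norm_num) hab hf (lobattoNodes_mem hab.le)
      (exactUpToDegree_lobatto a b) (fun t ht => peanoKernel_lobatto_nonpos ht) hpos⟩
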